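/- arXiv:2511.15135 — 4 statements merged into one kernel-verified Lean document; each statement's English description precedes it below -/
import Mathlib

section
/- (Kaimanovich–Vershik–Madiman inequality) If X, Y, Z are jointly independent ℚ-valued discrete random variables, then H[X + Y + Z] ≤ H[X + Y] + H[X + Z] - H[X]. -/
open scoped Classical
open Finset

/-- Probability of an event under a weight function on a finite sample space. -/
noncomputable def prb {Ω : Type*} [Fintype Ω] (μ : Ω → ℝ) (E : Set Ω) : ℝ :=
  ∑ ω ∈ Finset.univ.filter (fun ω => ω ∈ E), μ ω

/-- `μ` is a probability mass function on the finite space `Ω`. -/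
def IsProb {Ω : Type*} [Fintype Ω] (μ : Ω → ℝ) : Prop :=
  (∀ ω, 0 ≤ μ ω) ∧ ∑ ω, μ ω = 1

/-- Shannon entropy of a random variable `X` on a finite probability space. -/
noncomputable def ent {Ω S : Type*} [Fintype Ω] (μ : Ω → ℝ) (X : Ω → S) : ℝ :=
  ∑ s ∈ Finset.univ.image X, Real.negMulLog (prb μ {ω | X ω = s})

/-- Independence of two random variables. -/
def IndepRV {Ω S T : Type*} [Fintype Ω] (μ : Ω → ℝ) (X : Ω → S) (Y : Ω → T) : Prop :=
  ∀ x y, prb μ {ω | X ω = x ∧ Y ω = y} = prb μ {ω | X ω = x} * prb μ {ω | Y ω = y}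

/-- Conditional Shannon entropy `H[X|Z] = H[X,Z] - H[Z]`. -/
noncomputable def condEnt {Ω S T : Type*} [Fintype Ω] (μ : Ω → ℝ) (X : Ω → S) (Z : Ω → T) : ℝ :=
  ent μ (fun ω => (X ω, Z ω)) - ent μ Z

/-- Entropic Ruzsa distance `d[X;Y] = H[X'-Y'] - H[X]/2 - H[Y]/2`,
realized on the product space so that the copies are independent. -/
noncomputable def rdist {Ω₁ Ω₂ : Type*} [Fintype Ω₁] [Fintype Ω₂]
    (μ₁ : Ω₁ → ℝ) (μ₂ : Ω₂ → ℝ) (X : Ω₁ → ℚ) (Y : Ω₂ → ℚ) : ℝ :=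
  ent (fun p : Ω₁ × Ω₂ => μ₁ p.1 * μ₂ p.2) (fun p => X p.1 - Y p.2)
    - ent μ₁ X / 2 - ent μ₂ Y / 2

/-- The quantity `g(a) = H[X - a X'] - H[X]`, where `X'` is an independent copy of `X`. -/
noncomputable def gfun {Ω : Type*} [Fintype Ω] (μ : Ω → ℝ) (X : Ω → ℚ) (a : ℚ) : ℝ :=
  ent (fun p : Ω × Ω => μ p.1 * μ p.2) (fun p => X p.1 - a * X p.2) - ent μ X

/-- Projection `π_r(x,y) = x + r y` for a finite slope `some r`, and `π_∞(x,y) = y`. -/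
noncomputable def pSlope : Option ℚ → ℚ × ℚ → ℚ
  | none, p => p.2
  | some r, p => p.1 + r * p.2

/-- The measure `μ` conditioned on the event `Z = z`. -/
noncomputable def condMeasure {Ω T : Type*} [Fintype Ω] (μ : Ω → ℝ) (Z : Ω → T) (z : T) :
    Ω → ℝ :=
  fun ω => if Z ω = z then μ ω / prb μ {ω' | Z ω' = z} else 0

/-- `E_{Z=z} d[X|Z=z ; X|Z=z]`, the averaged conditional entropic Ruzsa self-distance. -/
noncomputable def condSelfDoubling {Ω T : Type*} [Fintype Ω] (μ : Ω → ℝ)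
    (X : Ω → ℚ) (Z : Ω → T) : ℝ :=
  ∑ z ∈ Finset.univ.image Z, prb μ {ω | Z ω = z} *
    rdist (condMeasure μ Z z) (condMeasure μ Z z) X X

/-! Writing each entropy as `-E[log p_V(V)]`, the claim says `E[log r] ≤ 0` for the ratio
`r = p_{X+Y}(X+Y) p_{X+Z}(X+Z) / (p_X(X) p_{X+Y+Z}(X+Y+Z))`, and since `log t ≤ t - 1` it
suffices that `E[r] ≤ 1`. Expanding `E[r]` over the independent values `x, y, z`, the factor
`p_X(x)` cancels; after substituting `s = x + y`, the sum over `x` of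
`p_Y(s - x) p_{X+Z}(x + z)` is at most `p_{Y+(X+Z)}(s + z) = p_{X+Y+Z}(s + z)` because `Y` is
independent of `X + Z`, and what remains is `∑_z p_Z(z) ∑_s p_{X+Y}(s) ≤ 1`. -/

open scoped Pointwise

noncomputable def probMass {Ω S : Type*} [Fintype Ω] (μ : Ω → ℝ) (X : Ω → S) (s : S) : ℝ :=
  prb μ {ω | X ω = s}

def IndepRV3 {Ω α β γ : Type*} [Fintype Ω] (μ : Ω → ℝ) (X : Ω → α) (Y : Ω → β) (Z : Ω → γ) :
    Prop :=
  ∀ x y z, prb μ {ω | X ω = x ∧ Y ω = y ∧ Z ω = z} =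
    probMass μ X x * probMass μ Y y * probMass μ Z z

lemma sum_comp_le_sum_of_injective {ι κ M : Type*} [AddCommMonoid M] [PartialOrder M]
    [IsOrderedAddMonoid M] {s : Finset ι} {t : Finset κ} {f : κ → M} {g : ι → κ}
    (hg : Function.Injective g) (hf : ∀ b, 0 ≤ f b) (hst : ∀ a ∈ s, f (g a) ≠ 0 → g a ∈ t) :
    ∑ a ∈ s, f (g a) ≤ ∑ b ∈ t, f b := by
  rw [← sum_image hg.injOn]
  calc ∑ b ∈ s.image g, f b ≤ ∑ b ∈ s.image g ∪ t, f b :=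
        sum_le_sum_of_subset_of_nonneg subset_union_left fun b _ _ => hf b
    _ = ∑ b ∈ t, f b := by
        refine (sum_subset subset_union_right fun b hb hbt => ?_).symm
        obtain ⟨a, ha, rfl⟩ := mem_image.mp ((mem_union.mp hb).resolve_right hbt)
        by_contra hne
        exact hbt (hst a ha hne)

section Mass

variable {Ω S : Type*} [Fintype Ω] {μ : Ω → ℝ}

lemma probMass_nonneg (hμ : ∀ ω, 0 ≤ μ ω) (X : Ω → S) (s : S) : 0 ≤ probMass μ X s :=
  sum_nonneg fun ω _ => hμ ω

lemma le_probMass_self (hμ : ∀ ω, 0 ≤ μ ω) (X : Ω → S) (ω : Ω) : μ ω ≤ probMass μ X (X ω) :=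
  single_le_sum (fun ω' _ => hμ ω') (mem_filter.mpr ⟨mem_univ ω, rfl⟩)

lemma probMass_self_pos (hμ : ∀ ω, 0 ≤ μ ω) (X : Ω → S) {ω : Ω} (hω : 0 < μ ω) :
    0 < probMass μ X (X ω) :=
  hω.trans_le (le_probMass_self hμ X ω)

lemma probMass_eq_zero (μ : Ω → ℝ) {X : Ω → S} {s : S} (hs : ∀ ω, X ω ≠ s) :
    probMass μ X s = 0 :=
  sum_eq_zero fun ω hω => absurd (mem_filter.mp hω).2 (hs ω)

lemma prb_empty (μ : Ω → ℝ) : prb μ ∅ = 0 := by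
  simp [prb]

lemma sum_prb_fiber_inter (μ : Ω → ℝ) {X : Ω → S} (E : Set Ω) {T : Finset S}
    (hT : ∀ ω, X ω ∈ T) : ∑ s ∈ T, prb μ {ω | X ω = s ∧ ω ∈ E} = prb μ E := by
  unfold prb
  rw [← sum_fiberwise_of_maps_to (g := X) (fun ω _ => hT ω) μ]
  refine sum_congr rfl fun s _ => sum_congr ?_ fun _ _ => rfl
  ext ω
  simp only [mem_filter, mem_univ, true_and, Set.mem_ofPred_eq]
  tauto

lemma sum_probMass_mul (μ : Ω → ℝ) {X : Ω → S} (f : S → ℝ) {T : Finset S}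
    (hT : ∀ ω, X ω ∈ T) : ∑ s ∈ T, probMass μ X s * f s = ∑ ω, μ ω * f (X ω) := by
  rw [← sum_fiberwise_of_maps_to (g := X) (fun ω _ => hT ω)]
  refine sum_congr rfl fun s _ => ?_
  rw [probMass, prb, sum_mul]
  refine sum_congr (by ext; simp) fun ω hω => ?_
  rw [(mem_filter.mp hω).2]

lemma sum_probMass_eq_one (hμ : IsProb μ) {X : Ω → S} {T : Finset S} (hT : ∀ ω, X ω ∈ T) :
    ∑ s ∈ T, probMass μ X s = 1 := by
  simpa [hμ.2] using sum_probMass_mul μ (fun _ => (1 : ℝ)) hT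

lemma ent_eq_neg_sum_mul_log (μ : Ω → ℝ) (X : Ω → S) :
    ent μ X = -∑ ω, μ ω * Real.log (probMass μ X (X ω)) := by
  rw [← sum_probMass_mul μ (fun s => Real.log (probMass μ X s))
    (fun ω => mem_image_of_mem X (mem_univ ω)), ent, ← sum_neg_distrib]
  exact sum_congr rfl fun s _ => by rw [Real.negMulLog, probMass]; ring

lemma sum_mul_log_nonpos (hμ : IsProb μ) {r : Ω → ℝ} (hr : ∀ ω, 0 < μ ω → 0 < r ω)
    (h : ∑ ω, μ ω * r ω ≤ 1) : ∑ ω, μ ω * Real.log (r ω) ≤ 0 := by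
  have hterm : ∀ ω, μ ω * Real.log (r ω) ≤ μ ω * r ω - μ ω := fun ω => by
    rcases (hμ.1 ω).eq_or_lt with h0 | hpos
    · simp [← h0]
    · nlinarith [Real.log_le_sub_one_of_pos (hr ω hpos)]
  calc ∑ ω, μ ω * Real.log (r ω) ≤ ∑ ω, (μ ω * r ω - μ ω) := sum_le_sum fun ω _ => hterm ω
    _ ≤ 0 := by rw [sum_sub_distrib, hμ.2]; linarith

end Mass

section Independence

variable {Ω α β γ : Type*} [Fintype Ω] {μ : Ω → ℝ}

lemma IndepRV.comp_right {X : Ω → α} {W : Ω → β} (h : IndepRV μ X W) (g : β → γ) :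
    IndepRV μ X (fun ω => g (W ω)) := by
  intro x c
  have hW : ∀ ω, W ω ∈ univ.image W := fun ω => mem_image_of_mem W (mem_univ ω)
  rw [← sum_prb_fiber_inter μ {ω | X ω = x ∧ g (W ω) = c} hW,
    ← sum_prb_fiber_inter μ {ω | g (W ω) = c} hW, mul_sum]
  refine sum_congr rfl fun w _ => ?_
  by_cases hw : g w = c
  · have h₁ : {ω | W ω = w ∧ ω ∈ {ω | X ω = x ∧ g (W ω) = c}} = {ω | X ω = x ∧ W ω = w} := by
      ext ω; simp only [Set.mem_ofPred_eq]; constructor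
      · rintro ⟨rfl, hx, -⟩; exact ⟨hx, rfl⟩
      · rintro ⟨hx, rfl⟩; exact ⟨rfl, hx, hw⟩
    have h₂ : {ω | W ω = w ∧ ω ∈ {ω | g (W ω) = c}} = {ω | W ω = w} := by
      ext ω; simp only [Set.mem_ofPred_eq, and_iff_left_iff_imp]; rintro rfl; exact hw
    rw [h₁, h₂, h]
  · have h₁ : {ω | W ω = w ∧ ω ∈ {ω | X ω = x ∧ g (W ω) = c}} = ∅ :=
      Set.eq_empty_of_forall_notMem fun ω ⟨hωw, _, hc⟩ => hw (hωw ▸ hc)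
    have h₂ : {ω | W ω = w ∧ ω ∈ {ω | g (W ω) = c}} = ∅ :=
      Set.eq_empty_of_forall_notMem fun ω ⟨hωw, hc⟩ => hw (hωw ▸ hc)
    rw [h₁, h₂, prb_empty, mul_zero]

lemma IndepRV.probMass_add {G : Type*} [AddCommGroup G] {U V : Ω → G} (h : IndepRV μ U V)
    {T : Finset G} (hT : ∀ ω, U ω ∈ T) (t : G) :
    probMass μ (fun ω => U ω + V ω) t = ∑ u ∈ T, probMass μ U u * probMass μ V (t - u) := by
  rw [probMass, ← sum_prb_fiber_inter μ _ hT]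
  refine sum_congr rfl fun u _ => ?_
  have hfiber : {ω | U ω = u ∧ ω ∈ {ω | U ω + V ω = t}} = {ω | U ω = u ∧ V ω = t - u} := by
    ext ω
    simp only [Set.mem_ofPred_eq, and_congr_right_iff]
    rintro rfl
    exact ⟨fun h => eq_sub_of_add_eq' h, fun h => add_eq_of_eq_sub' h⟩
  rw [hfiber, h]
  rfl

lemma IndepRV3.indepRV_pair (hμ : IsProb μ) {X : Ω → α} {Y : Ω → β} {Z : Ω → γ}
    (h : IndepRV3 μ X Y Z) : IndepRV μ Y (fun ω => (X ω, Z ω)) := by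
  rintro y ⟨x, z⟩
  have hjoint : ∀ y, prb μ {ω | Y ω = y ∧ (X ω, Z ω) = (x, z)} =
      probMass μ X x * probMass μ Y y * probMass μ Z z := fun y => by
    rw [← h]
    congr 1
    ext ω
    simp only [Set.mem_ofPred_eq, Prod.mk.injEq]
    tauto
  have hY : ∀ ω, Y ω ∈ univ.image Y := fun ω => mem_image_of_mem Y (mem_univ ω)
  have hmarg : prb μ {ω | (X ω, Z ω) = (x, z)} = probMass μ X x * probMass μ Z z := by
    rw [← sum_prb_fiber_inter μ _ hY]
    simp_rw [Set.mem_ofPred_eq, hjoint]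
    rw [← sum_mul, ← mul_sum, sum_probMass_eq_one hμ hY]
    ring
  rw [hjoint, hmarg]
  simp only [probMass]
  ring

lemma IndepRV3.sum_mul_apply {X : Ω → α} {Y : Ω → β} {Z : Ω → γ} (h : IndepRV3 μ X Y Z)
    (F : α → β → γ → ℝ) :
    ∑ ω, μ ω * F (X ω) (Y ω) (Z ω) =
      ∑ x ∈ univ.image X, ∑ y ∈ univ.image Y, ∑ z ∈ univ.image Z,
        probMass μ X x * probMass μ Y y * probMass μ Z z * F x y z := by
  rw [← sum_probMass_mul μ (X := fun ω => (X ω, Y ω, Z ω)) (fun v => F v.1 v.2.1 v.2.2)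
    (T := univ.image X ×ˢ univ.image Y ×ˢ univ.image Z)
    (fun ω => mem_product.mpr ⟨mem_image_of_mem X (mem_univ ω),
      mem_product.mpr ⟨mem_image_of_mem Y (mem_univ ω), mem_image_of_mem Z (mem_univ ω)⟩⟩)]
  simp_rw [sum_product]
  refine sum_congr rfl fun x _ => sum_congr rfl fun y _ => sum_congr rfl fun z _ => ?_
  rw [← h]
  congr 1
  unfold probMass
  congr 1
  ext ω
  simp only [Set.mem_ofPred_eq, Prod.mk.injEq]

end Independence

section Convolution

variable {G : Type*} [AddCommGroup G] {pY pZ pA pB pC : G → ℝ}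

lemma sum_sum_mul_div_le (SX SY : Finset G) (hpY : ∀ y, 0 ≤ pY y) (hpA : ∀ s, 0 ≤ pA s)
    (hpB : ∀ t, 0 ≤ pB t) (hpY_supp : ∀ y ∉ SY, pY y = 0)
    (hpC : ∀ u, pC u = ∑ y ∈ SY, pY y * pB (u - y)) (z : G) :
    ∑ x ∈ SX, ∑ y ∈ SY, pY y * (pA (x + y) * pB (x + z) / pC (x + y + z)) ≤
      ∑ s ∈ SX + SY, pA s := by
  have hpC_nonneg : ∀ u, 0 ≤ pC u := fun u => by
    rw [hpC]; exact sum_nonneg fun y _ => mul_nonneg (hpY y) (hpB _)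
  have hconv : ∀ s, ∑ x ∈ SX, pY (s - x) * pB (x + z) ≤ pC (s + z) := fun s => by
    rw [hpC]
    calc ∑ x ∈ SX, pY (s - x) * pB (x + z) = ∑ x ∈ SX, pY (s - x) * pB (s + z - (s - x)) :=
          sum_congr rfl fun x _ => by congr 2; abel
      _ ≤ _ := sum_comp_le_sum_of_injective sub_right_injective
          (fun y => mul_nonneg (hpY y) (hpB _))
          (fun x _ hne => by_contra fun hx => hne (by simp [hpY_supp _ hx]))
  calc ∑ x ∈ SX, ∑ y ∈ SY, pY y * (pA (x + y) * pB (x + z) / pC (x + y + z))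
      ≤ ∑ x ∈ SX, ∑ s ∈ SX + SY, pY (s - x) * (pA s * pB (x + z) / pC (s + z)) := by
        refine sum_le_sum fun x hx => ?_
        calc ∑ y ∈ SY, pY y * (pA (x + y) * pB (x + z) / pC (x + y + z))
            = ∑ y ∈ SY, pY (x + y - x) * (pA (x + y) * pB (x + z) / pC (x + y + z)) := by
              simp only [add_sub_cancel_left]
          _ ≤ _ := sum_comp_le_sum_of_injective (add_right_injective x)
              (f := fun s => pY (s - x) * (pA s * pB (x + z) / pC (s + z)))
              (fun s => mul_nonneg (hpY _) (div_nonneg (mul_nonneg (hpA s) (hpB _)) (hpC_nonneg _)))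
              (fun y hy _ => add_mem_add hx hy)
    _ = ∑ s ∈ SX + SY, pA s / pC (s + z) * ∑ x ∈ SX, pY (s - x) * pB (x + z) := by
        rw [sum_comm]
        refine sum_congr rfl fun s _ => ?_
        rw [mul_sum]
        exact sum_congr rfl fun x _ => by ring
    _ ≤ ∑ s ∈ SX + SY, pA s := by
        refine sum_le_sum fun s _ => ?_
        rcases (hpC_nonneg (s + z)).eq_or_lt with h0 | hpos
        · simp [← h0, hpA s]
        · calc pA s / pC (s + z) * ∑ x ∈ SX, pY (s - x) * pB (x + z)
              ≤ pA s / pC (s + z) * pC (s + z) :=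
                mul_le_mul_of_nonneg_left (hconv s) (div_nonneg (hpA s) hpos.le)
            _ = pA s := div_mul_cancel₀ _ hpos.ne'

lemma sum_sum_sum_mul_div_le_one (SX SY SZ : Finset G) (hpY : ∀ y, 0 ≤ pY y)
    (hpZ : ∀ z, 0 ≤ pZ z) (hpA : ∀ s, 0 ≤ pA s) (hpB : ∀ t, 0 ≤ pB t)
    (hpY_supp : ∀ y ∉ SY, pY y = 0) (hpC : ∀ u, pC u = ∑ y ∈ SY, pY y * pB (u - y))
    (hZ : ∑ z ∈ SZ, pZ z ≤ 1) (hA : ∑ s ∈ SX + SY, pA s ≤ 1) :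
    ∑ x ∈ SX, ∑ y ∈ SY, ∑ z ∈ SZ, pY y * pZ z * (pA (x + y) * pB (x + z) / pC (x + y + z)) ≤ 1 :=
  calc ∑ x ∈ SX, ∑ y ∈ SY, ∑ z ∈ SZ, pY y * pZ z * (pA (x + y) * pB (x + z) / pC (x + y + z))
      = ∑ z ∈ SZ, pZ z *
          ∑ x ∈ SX, ∑ y ∈ SY, pY y * (pA (x + y) * pB (x + z) / pC (x + y + z)) := by
        rw [sum_congr rfl fun x _ => sum_comm, sum_comm]
        refine sum_congr rfl fun z _ => ?_
        simp_rw [mul_sum]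
        exact sum_congr rfl fun x _ => sum_congr rfl fun y _ => by ring
    _ ≤ ∑ z ∈ SZ, pZ z * ∑ s ∈ SX + SY, pA s :=
        sum_le_sum fun z _ => mul_le_mul_of_nonneg_left
          (sum_sum_mul_div_le SX SY hpY hpA hpB hpY_supp hpC z) (hpZ z)
    _ ≤ 1 := by
        rw [← sum_mul]
        exact mul_le_one₀ hZ (sum_nonneg fun s _ => hpA s) hA

end Convolution

section KVM

variable {Ω G : Type*} [Fintype Ω] [AddCommGroup G] {μ : Ω → ℝ}

noncomputable def kvmRatio (μ : Ω → ℝ) (X Y Z : Ω → G) (x y z : G) : ℝ :=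
  probMass μ (fun ω => X ω + Y ω) (x + y) * probMass μ (fun ω => X ω + Z ω) (x + z) /
    (probMass μ X x * probMass μ (fun ω => X ω + Y ω + Z ω) (x + y + z))

lemma kvmRatio_pos (hμ : ∀ ω, 0 ≤ μ ω) (X Y Z : Ω → G) {ω : Ω} (hω : 0 < μ ω) :
    0 < kvmRatio μ X Y Z (X ω) (Y ω) (Z ω) :=
  div_pos (mul_pos (probMass_self_pos hμ (fun ω => X ω + Y ω) hω)
      (probMass_self_pos hμ (fun ω => X ω + Z ω) hω))
    (mul_pos (probMass_self_pos hμ X hω) (probMass_self_pos hμ (fun ω => X ω + Y ω + Z ω) hω))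

lemma ent_sub_eq_neg_sum_mul_log_kvmRatio (hμ : ∀ ω, 0 ≤ μ ω) (X Y Z : Ω → G) :
    ent μ (fun ω => X ω + Y ω) + ent μ (fun ω => X ω + Z ω) - ent μ X
        - ent μ (fun ω => X ω + Y ω + Z ω) =
      -∑ ω, μ ω * Real.log (kvmRatio μ X Y Z (X ω) (Y ω) (Z ω)) := by
  have hterm : ∀ ω, μ ω * Real.log (kvmRatio μ X Y Z (X ω) (Y ω) (Z ω)) =
      μ ω * Real.log (probMass μ (fun ω => X ω + Y ω) (X ω + Y ω))
        + μ ω * Real.log (probMass μ (fun ω => X ω + Z ω) (X ω + Z ω))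
        - μ ω * Real.log (probMass μ X (X ω))
        - μ ω * Real.log (probMass μ (fun ω => X ω + Y ω + Z ω) (X ω + Y ω + Z ω)) := fun ω => by
    rcases (hμ ω).eq_or_lt with h0 | hω
    · simp [← h0]
    · have hA := probMass_self_pos hμ (fun ω => X ω + Y ω) hω
      have hB := probMass_self_pos hμ (fun ω => X ω + Z ω) hω
      have hX := probMass_self_pos hμ X hω
      have hC := probMass_self_pos hμ (fun ω => X ω + Y ω + Z ω) hω
      rw [kvmRatio, Real.log_div (mul_pos hA hB).ne' (mul_pos hX hC).ne',
        Real.log_mul hA.ne' hB.ne', Real.log_mul hX.ne' hC.ne']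
      ring
  simp only [ent_eq_neg_sum_mul_log, hterm, sum_add_distrib, sum_sub_distrib]
  ring

lemma sum_mul_kvmRatio_le_one (hμ : IsProb μ) {X Y Z : Ω → G} (h : IndepRV3 μ X Y Z) :
    ∑ ω, μ ω * kvmRatio μ X Y Z (X ω) (Y ω) (Z ω) ≤ 1 := by
  have hX : ∀ ω, X ω ∈ univ.image X := fun ω => mem_image_of_mem X (mem_univ ω)
  have hY : ∀ ω, Y ω ∈ univ.image Y := fun ω => mem_image_of_mem Y (mem_univ ω)
  have hZ : ∀ ω, Z ω ∈ univ.image Z := fun ω => mem_image_of_mem Z (mem_univ ω)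
  have hconv : ∀ u, probMass μ (fun ω => X ω + Y ω + Z ω) u =
      ∑ y ∈ univ.image Y, probMass μ Y y * probMass μ (fun ω => X ω + Z ω) (u - y) := fun u => by
    have hYXZ : IndepRV μ Y (fun ω => X ω + Z ω) :=
      (h.indepRV_pair hμ).comp_right fun p => p.1 + p.2
    rw [← hYXZ.probMass_add hY u]
    congr 1
    funext ω
    abel
  have hp : ∀ (V : Ω → G) s, 0 ≤ probMass μ V s := probMass_nonneg hμ.1
  rw [h.sum_mul_apply]
  calc _ ≤ ∑ x ∈ univ.image X, ∑ y ∈ univ.image Y, ∑ z ∈ univ.image Z,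
          probMass μ Y y * probMass μ Z z *
            (probMass μ (fun ω => X ω + Y ω) (x + y) * probMass μ (fun ω => X ω + Z ω) (x + z) /
              probMass μ (fun ω => X ω + Y ω + Z ω) (x + y + z)) := by
        refine sum_le_sum fun x _ => sum_le_sum fun y _ => sum_le_sum fun z _ => ?_
        set a := probMass μ (fun ω => X ω + Y ω) (x + y) * probMass μ (fun ω => X ω + Z ω) (x + z)
        set c := probMass μ (fun ω => X ω + Y ω + Z ω) (x + y + z)
        calc probMass μ X x * probMass μ Y y * probMass μ Z z * kvmRatio μ X Y Z x y z
            = probMass μ Y y * probMass μ Z z * (probMass μ X x * a / (probMass μ X x * c)) := by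
              rw [kvmRatio]; ring
          _ ≤ probMass μ Y y * probMass μ Z z * (a / c) := mul_le_mul_of_nonneg_left
              (mul_div_mul_left_le (div_nonneg (mul_nonneg (hp _ _) (hp _ _)) (hp _ _)))
              (mul_nonneg (hp Y y) (hp Z z))
    _ ≤ 1 := sum_sum_sum_mul_div_le_one _ _ _ (hp Y) (hp Z) (hp _) (hp _)
        (fun y hy => probMass_eq_zero μ fun ω hω => hy (hω ▸ hY ω)) hconv
        (sum_probMass_eq_one hμ hZ).le
        (sum_probMass_eq_one hμ fun ω => add_mem_add (hX ω) (hY ω)).le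

end KVM

/-- Kaimanovich–Vershik–Madiman: for jointly independent `X, Y, Z`,
`H[X + Y + Z] ≤ H[X + Y] + H[X + Z] - H[X]`. -/
theorem kvm_inequality {Ω : Type*} [Fintype Ω] (μ : Ω → ℝ) (hμ : IsProb μ)
    (X Y Z : Ω → ℚ)
    (hindep : ∀ x y z : ℚ,
      prb μ {ω | X ω = x ∧ Y ω = y ∧ Z ω = z} =
        prb μ {ω | X ω = x} * prb μ {ω | Y ω = y} * prb μ {ω | Z ω = z}) :
    ent μ (fun ω => X ω + Y ω + Z ω) ≤
      ent μ (fun ω => X ω + Y ω) + ent μ (fun ω => X ω + Z ω) - ent μ X := by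
  have hgibbs := sum_mul_log_nonpos hμ (fun ω hω => kvmRatio_pos hμ.1 X Y Z hω)
    (sum_mul_kvmRatio_le_one hμ hindep)
  linarith [ent_sub_eq_neg_sum_mul_log_kvmRatio hμ.1 X Y Z]
end

section
/- The entropic Ruzsa distance satisfies the entropy comparison bound: for any ℚ-valued discrete random variables X and Y, |H[X] - H[Y]| ≤ 2 d[X; Y]. -/
open scoped Classical
open Finset

/-!
Conditioning on the second copy: for independent `X` and `Y`,
`H[X - Y] ≥ H[X - Y | Y] = H[X]`, by concavity of `x ↦ -x log x`, and symmetrically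
`H[X - Y] ≥ H[Y]`. Hence `2 d[X;Y] = 2 H[X - Y] - H[X] - H[Y] ≥ |H[X] - H[Y]|`.
-/

section Entropy

variable {Ω Ω' Ω₁ Ω₂ S U : Type*} [Fintype Ω] [Fintype Ω'] [Fintype Ω₁] [Fintype Ω₂]

lemma prb_nonneg {μ : Ω → ℝ} (hμ : ∀ ω, 0 ≤ μ ω) (E : Set Ω) : 0 ≤ prb μ E :=
  Finset.sum_nonneg fun ω _ => hμ ω

lemma prb_eq_zero_of_notMem_image (μ : Ω → ℝ) {X : Ω → S} {s : S}
    (hs : s ∉ univ.image X) : prb μ {ω | X ω = s} = 0 :=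
  Finset.sum_eq_zero fun ω hω => absurd ((mem_filter.1 hω).2 ▸ mem_image_of_mem X (mem_univ ω)) hs

lemma ent_eq_sum_of_image_subset (μ : Ω → ℝ) {X : Ω → S} {A : Finset S}
    (hA : univ.image X ⊆ A) : ent μ X = ∑ s ∈ A, Real.negMulLog (prb μ {ω | X ω = s}) :=
  Finset.sum_subset hA fun s _ hs => by
    rw [prb_eq_zero_of_notMem_image μ hs, Real.negMulLog_zero]

lemma ent_comp_of_injective (μ : Ω → ℝ) (X : Ω → S) {f : S → U} (hf : Function.Injective f) :
    ent μ (fun ω => f (X ω)) = ent μ X := by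
  change ∑ u ∈ univ.image (f ∘ X), _ = _
  rw [← Finset.image_image, Finset.sum_image fun _ _ _ _ h => hf h]
  simp only [hf.eq_iff]
  rfl

lemma ent_comp_equiv (μ : Ω → ℝ) (X : Ω → S) (e : Ω' ≃ Ω) :
    ent (fun ω => μ (e ω)) (fun ω => X (e ω)) = ent μ X := by
  have himage : univ.image (fun ω => X (e ω)) = univ.image X := by
    ext s; simp [e.surjective.exists]
  have hprb (s : S) : prb (fun ω => μ (e ω)) {ω | X (e ω) = s} = prb μ {ω | X ω = s} := by
    simp only [prb, Finset.sum_filter, Set.mem_ofPred_eq]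
    exact e.sum_comp fun ω => if X ω = s then μ ω else 0
  simp only [ent, himage, hprb]

lemma prb_prod_eq_sum (μ₁ : Ω₁ → ℝ) (μ₂ : Ω₂ → ℝ) (W : Ω₁ × Ω₂ → S) (s : S) :
    prb (fun p => μ₁ p.1 * μ₂ p.2) {p | W p = s} = ∑ ω₂, μ₂ ω₂ * prb μ₁ {ω | W (ω, ω₂) = s} := by
  simp only [prb, Finset.sum_filter, Set.mem_ofPred_eq, Fintype.sum_prod_type_right,
    Finset.mul_sum]
  refine Finset.sum_congr rfl fun ω₂ _ => Finset.sum_congr rfl fun ω₁ _ => ?_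
  split_ifs <;> ring

/-- Conditioning on the second coordinate of a product space does not increase entropy. -/
theorem sum_mul_ent_le_ent_prod {μ₁ : Ω₁ → ℝ} {μ₂ : Ω₂ → ℝ} (hμ₁ : ∀ ω, 0 ≤ μ₁ ω)
    (hμ₂ : IsProb μ₂) (W : Ω₁ × Ω₂ → S) :
    ∑ ω₂, μ₂ ω₂ * ent μ₁ (fun ω => W (ω, ω₂)) ≤ ent (fun p => μ₁ p.1 * μ₂ p.2) W := by
  have hsection (ω₂ : Ω₂) : univ.image (fun ω => W (ω, ω₂)) ⊆ univ.image W := by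
    intro s hs
    obtain ⟨ω, -, rfl⟩ := mem_image.1 hs
    exact mem_image_of_mem W (mem_univ _)
  have jensen (s : S) : ∑ ω₂, μ₂ ω₂ * Real.negMulLog (prb μ₁ {ω | W (ω, ω₂) = s})
      ≤ Real.negMulLog (prb (fun p => μ₁ p.1 * μ₂ p.2) {p | W p = s}) := by
    rw [prb_prod_eq_sum]
    exact Real.concaveOn_negMulLog.le_map_sum (fun ω₂ _ => hμ₂.1 ω₂) hμ₂.2
      fun ω₂ _ => prb_nonneg hμ₁ _
  calc ∑ ω₂, μ₂ ω₂ * ent μ₁ (fun ω => W (ω, ω₂))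
      = ∑ s ∈ univ.image W, ∑ ω₂, μ₂ ω₂ * Real.negMulLog (prb μ₁ {ω | W (ω, ω₂) = s}) := by
        simp only [ent_eq_sum_of_image_subset μ₁ (hsection _), Finset.mul_sum]
        exact Finset.sum_comm
    _ ≤ ent (fun p => μ₁ p.1 * μ₂ p.2) W := Finset.sum_le_sum fun s _ => jensen s

end Entropy

section Difference

variable {Ω₁ Ω₂ G : Type*} [Fintype Ω₁] [Fintype Ω₂] [AddGroup G]

lemma ent_le_ent_sub_left {μ₁ : Ω₁ → ℝ} {μ₂ : Ω₂ → ℝ} (hμ₁ : ∀ ω, 0 ≤ μ₁ ω) (hμ₂ : IsProb μ₂)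
    (X : Ω₁ → G) (Y : Ω₂ → G) :
    ent μ₁ X ≤ ent (fun p : Ω₁ × Ω₂ => μ₁ p.1 * μ₂ p.2) (fun p => X p.1 - Y p.2) := by
  have hcond := sum_mul_ent_le_ent_prod hμ₁ hμ₂ (fun p => X p.1 - Y p.2)
  simpa only [ent_comp_of_injective μ₁ X (sub_left_injective (b := Y _)), ← Finset.sum_mul,
    hμ₂.2, one_mul] using hcond

lemma ent_le_ent_sub_right {μ₁ : Ω₁ → ℝ} {μ₂ : Ω₂ → ℝ} (hμ₁ : IsProb μ₁) (hμ₂ : ∀ ω, 0 ≤ μ₂ ω)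
    (X : Ω₁ → G) (Y : Ω₂ → G) :
    ent μ₂ Y ≤ ent (fun p : Ω₁ × Ω₂ => μ₁ p.1 * μ₂ p.2) (fun p => X p.1 - Y p.2) := by
  -- condition on `X` by swapping the factors of the product space
  have hcond := sum_mul_ent_le_ent_prod hμ₂ hμ₁ (fun q : Ω₂ × Ω₁ => X q.2 - Y q.1)
  simp only [ent_comp_of_injective μ₂ Y (sub_right_injective (b := X _)), ← Finset.sum_mul,
    hμ₁.2, one_mul] at hcond
  convert hcond using 1
  rw [← ent_comp_equiv _ _ (Equiv.prodComm Ω₂ Ω₁)]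
  simp [mul_comm]

end Difference

/-- the entropic Ruzsa distance satisfies `|H[X] - H[Y]| ≤ 2 d[X;Y]`. -/
theorem abs_ent_sub_le_two_rdist {Ω₁ Ω₂ : Type*} [Fintype Ω₁] [Fintype Ω₂]
    (μ₁ : Ω₁ → ℝ) (μ₂ : Ω₂ → ℝ) (hμ₁ : IsProb μ₁) (hμ₂ : IsProb μ₂)
    (X : Ω₁ → ℚ) (Y : Ω₂ → ℚ) :
    |ent μ₁ X - ent μ₂ Y| ≤ 2 * rdist μ₁ μ₂ X Y := by
  have hX := ent_le_ent_sub_left hμ₁.1 hμ₂ X Y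
  have hY := ent_le_ent_sub_right hμ₁ hμ₂.1 X Y
  rw [rdist, abs_sub_le_iff]
  constructor <;> linarith
end

section
/- (Conditional entropic BSG, first form) Let X, Y be ℚ-valued discrete random variables and Z a further discrete random variable, all on a common probability space. Let (X', Y, Z) be a copy of (X, Y, Z) with X and X' conditionally independent given (Y, Z). Then H[X - X' | Y, Z] ≤ 2 H[X + Y | Z] + H[Y | Z] + 2 H[X | Z] - 2 H[X, Y | Z]. -/
open scoped Classical
open Finset

/-!
Write `D = X - X'`. Conditioning reduces entropy, so `H[D | Y,Z] ≤ H[D | Z]`. The tuples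
`(X' + Y, X, X', D, Z)` and `(X, X', Y, Z)` determine each other, so submodularity gives
`H[D | Z] ≤ H[X + Y, X' + Y | Z] + H[X, X' | Z] - H[X, X', Y | Z]`. The first two terms are
bounded by subadditivity, and conditional independence together with `X'` being a copy of `X`
gives `H[X, X', Y | Z] = 2 H[X, Y | Z] - H[Y | Z]`.

The entropy inequalities are derived from `H[W] = -∑ ω, μ ω * log P(W = W ω)`; submodularity is
Gibbs' inequality against `q(a, b, c) = P(a, c) P(b, c) / P(c)`, which has total mass at most one.
-/

open Real

noncomputable def law {Ω S : Type*} [Fintype Ω] (μ : Ω → ℝ) (W : Ω → S) (s : S) : ℝ :=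
  prb μ {ω | W ω = s}

section Entropy

variable {Ω S V α β γ : Type*} [Fintype Ω] {μ : Ω → ℝ}

lemma law_pos (hμ : ∀ ω, 0 ≤ μ ω) (W : Ω → S) {ω : Ω} (hω : 0 < μ ω) : 0 < law μ W (W ω) :=
  hω.trans_le (single_le_sum (f := μ) (fun ω _ => hμ ω) (by simp))

lemma law_nonneg (hμ : ∀ ω, 0 ≤ μ ω) (W : Ω → S) (s : S) : 0 ≤ law μ W s :=
  sum_nonneg fun ω _ => hμ ω

lemma law_eq_sum_mul_ite (W : Ω → S) (s : S) :
    law μ W s = ∑ ω, μ ω * if W ω = s then 1 else 0 := by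
  simp [law, prb, sum_filter]

lemma sum_mul_comp_eq_sum_law (W : Ω → S) {t : Finset S} (ht : ∀ ω, W ω ∈ t) (f : S → ℝ) :
    ∑ ω, μ ω * f (W ω) = ∑ s ∈ t, law μ W s * f s := by
  rw [← sum_fiberwise_of_maps_to (fun ω _ => ht ω)]
  refine sum_congr rfl fun s _ => ?_
  rw [law, prb, sum_mul]
  exact sum_congr (by ext; simp) fun ω hω => by rw [(mem_filter.1 hω).2]

lemma sum_mul_congr_of_pos (hμ : ∀ ω, 0 ≤ μ ω) {f g : Ω → ℝ}
    (h : ∀ ω, 0 < μ ω → f ω = g ω) : ∑ ω, μ ω * f ω = ∑ ω, μ ω * g ω := by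
  refine sum_congr rfl fun ω _ => ?_
  rcases (hμ ω).eq_or_lt with hω | hω
  · simp [← hω]
  · rw [h ω hω]

lemma ent_eq_neg_sum_mul_log_law (W : Ω → S) :
    ent μ W = -∑ ω, μ ω * log (law μ W (W ω)) := by
  rw [sum_mul_comp_eq_sum_law W (fun ω => mem_image_of_mem W (mem_univ ω))
    fun s => log (law μ W s), ent, ← sum_neg_distrib]
  simp only [negMulLog, neg_mul]
  rfl

lemma ent_congr_of_eq_iff {W₁ : Ω → S} {W₂ : Ω → V}
    (h : ∀ ω ω', W₁ ω' = W₁ ω ↔ W₂ ω' = W₂ ω) : ent μ W₁ = ent μ W₂ := by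
  simp only [ent_eq_neg_sum_mul_log_law, law, h]

lemma sum_mul_comp_eq_of_law_eq {W₁ W₂ : Ω → S} (h : law μ W₁ = law μ W₂) (f : S → ℝ) :
    ∑ ω, μ ω * f (W₁ ω) = ∑ ω, μ ω * f (W₂ ω) := by
  rw [sum_mul_comp_eq_sum_law W₁ (t := univ.image W₁ ∪ univ.image W₂) (by simp),
    sum_mul_comp_eq_sum_law W₂ (t := univ.image W₁ ∪ univ.image W₂) (by simp), h]

lemma law_comp_eq_of_law_eq {W₁ W₂ : Ω → S} (h : law μ W₁ = law μ W₂) (φ : S → V) :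
    law μ (fun ω => φ (W₁ ω)) = law μ (fun ω => φ (W₂ ω)) := by
  funext v
  simp only [law_eq_sum_mul_ite]
  exact sum_mul_comp_eq_of_law_eq h fun s => if φ s = v then 1 else 0

lemma ent_eq_of_law_eq {W₁ W₂ : Ω → S} (h : law μ W₁ = law μ W₂) : ent μ W₁ = ent μ W₂ := by
  rw [ent_eq_neg_sum_mul_log_law, ent_eq_neg_sum_mul_log_law, h,
    sum_mul_comp_eq_of_law_eq h fun s => log (law μ W₂ s)]

lemma ent_comp_eq_of_law_eq {W₁ W₂ : Ω → S} (h : law μ W₁ = law μ W₂) (φ : S → V) :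
    ent μ (fun ω => φ (W₁ ω)) = ent μ (fun ω => φ (W₂ ω)) :=
  ent_eq_of_law_eq (law_comp_eq_of_law_eq h φ)

lemma ent_le_neg_sum_mul_log (hμ : IsProb μ) (W : Ω → S) {q : S → ℝ} (hq : 0 ≤ q)
    (hq_pos : ∀ ω, 0 < μ ω → 0 < q (W ω)) {t : Finset S} (ht : ∀ ω, W ω ∈ t)
    (hq_sum : ∑ s ∈ t, q s ≤ 1) :
    ent μ W ≤ -∑ ω, μ ω * log (q (W ω)) := by
  obtain ⟨hμ0, hμ1⟩ := hμ
  have hlog : ∀ ω, μ ω * log (q (W ω)) - μ ω * log (law μ W (W ω)) ≤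
      μ ω * (q (W ω) / law μ W (W ω)) - μ ω := by
    intro ω
    rcases (hμ0 ω).eq_or_lt with hω | hω
    · simp [← hω]
    · have hp := law_pos hμ0 W hω
      rw [← mul_sub, ← log_div (hq_pos ω hω).ne' hp.ne', ← mul_sub_one]
      exact mul_le_mul_of_nonneg_left (log_le_sub_one_of_pos (div_pos (hq_pos ω hω) hp)) hω.le
  have hmass : ∑ ω, μ ω * (q (W ω) / law μ W (W ω)) ≤ 1 := by
    rw [sum_mul_comp_eq_sum_law W ht fun s => q s / law μ W s]
    refine (sum_le_sum fun s _ => ?_).trans hq_sum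
    rcases eq_or_ne (law μ W s) 0 with hs | hs
    · simpa [hs] using hq s
    · rw [mul_div_cancel₀ _ hs]
  have hsum := sum_le_sum fun ω (_ : ω ∈ univ) => hlog ω
  rw [sum_sub_distrib, sum_sub_distrib, hμ1] at hsum
  rw [ent_eq_neg_sum_mul_log_law]
  linarith

lemma sum_law_prod_mk_left (A : Ω → α) (C : Ω → γ) {t : Finset α} (ht : ∀ ω, A ω ∈ t) (c : γ) :
    ∑ a ∈ t, law μ (fun ω => (A ω, C ω)) (a, c) = law μ C c := by
  simp only [law_eq_sum_mul_ite, Prod.mk.injEq]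
  rw [sum_comm]
  refine sum_congr rfl fun ω _ => ?_
  rw [← mul_sum]
  simp [ite_and, ht]

lemma sum_law_mul_law_div_law_le_one (hμ : IsProb μ) (A : Ω → α) (B : Ω → β) (C : Ω → γ) :
    ∑ s ∈ univ.image (fun ω => (A ω, B ω, C ω)),
      law μ (fun ω => (A ω, C ω)) (s.1, s.2.2) * law μ (fun ω => (B ω, C ω)) s.2 /
        law μ C s.2.2 ≤ 1 := by
  calc _ ≤ ∑ s ∈ univ.image A ×ˢ univ.image B ×ˢ univ.image C,
          law μ (fun ω => (A ω, C ω)) (s.1, s.2.2) * law μ (fun ω => (B ω, C ω)) s.2 /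
            law μ C s.2.2 := by
        refine sum_le_sum_of_subset_of_nonneg ?_ fun s _ _ => ?_
        · intro s hs
          obtain ⟨ω, -, rfl⟩ := mem_image.1 hs
          simp
        · exact div_nonneg (mul_nonneg (law_nonneg hμ.1 _ _) (law_nonneg hμ.1 _ _))
            (law_nonneg hμ.1 _ _)
    _ = ∑ c ∈ univ.image C, (∑ a ∈ univ.image A, law μ (fun ω => (A ω, C ω)) (a, c)) *
          (∑ b ∈ univ.image B, law μ (fun ω => (B ω, C ω)) (b, c)) / law μ C c := by
        simp only [sum_product, sum_mul_sum, sum_div]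
        conv_lhs => enter [2, a]; rw [sum_comm]
        exact sum_comm
    _ = ∑ c ∈ univ.image C, law μ C c := by
        simp only [sum_law_prod_mk_left _ _ (fun ω => mem_image_of_mem _ (mem_univ ω)),
          mul_self_div_self]
    _ = 1 := by
        simpa [hμ.2] using
          (sum_mul_comp_eq_sum_law (μ := μ) C (t := univ.image C) (by simp) 1).symm

theorem ent_triple_add_ent_le (hμ : IsProb μ) (A : Ω → α) (B : Ω → β) (C : Ω → γ) :
    ent μ (fun ω => (A ω, B ω, C ω)) + ent μ C ≤
      ent μ (fun ω => (A ω, C ω)) + ent μ (fun ω => (B ω, C ω)) := by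
  have hμ0 := hμ.1
  have hgibbs := ent_le_neg_sum_mul_log hμ (fun ω => (A ω, B ω, C ω))
    (q := fun s => law μ (fun ω => (A ω, C ω)) (s.1, s.2.2) * law μ (fun ω => (B ω, C ω)) s.2 /
      law μ C s.2.2)
    (fun s => div_nonneg (mul_nonneg (law_nonneg hμ0 _ _) (law_nonneg hμ0 _ _))
      (law_nonneg hμ0 _ _))
    (fun ω hω => div_pos (mul_pos (law_pos hμ0 _ hω) (law_pos hμ0 _ hω)) (law_pos hμ0 _ hω))
    (fun ω => mem_image_of_mem _ (mem_univ ω)) (sum_law_mul_law_div_law_le_one hμ A B C)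
  have hsplit : ∑ ω, μ ω * log (law μ (fun ω => (A ω, C ω)) (A ω, C ω) *
        law μ (fun ω => (B ω, C ω)) (B ω, C ω) / law μ C (C ω)) =
      ∑ ω, μ ω * (log (law μ (fun ω => (A ω, C ω)) (A ω, C ω)) +
        log (law μ (fun ω => (B ω, C ω)) (B ω, C ω)) - log (law μ C (C ω))) :=
    sum_mul_congr_of_pos hμ0 fun ω hω => by
      rw [log_div (mul_pos (law_pos hμ0 _ hω) (law_pos hμ0 _ hω)).ne' (law_pos hμ0 C hω).ne',
        log_mul (law_pos hμ0 _ hω).ne' (law_pos hμ0 _ hω).ne']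
  simp only [mul_sub, mul_add, sum_sub_distrib, sum_add_distrib] at hsplit
  simp only [ent_eq_neg_sum_mul_log_law] at hgibbs ⊢
  linarith

theorem ent_triple_add_ent_eq_of_condIndep (hμ : ∀ ω, 0 ≤ μ ω)
    (A : Ω → α) (B : Ω → β) (C : Ω → γ)
    (h : ∀ a b c, law μ (fun ω => (A ω, B ω, C ω)) (a, b, c) * law μ C c =
      law μ (fun ω => (A ω, C ω)) (a, c) * law μ (fun ω => (B ω, C ω)) (b, c)) :
    ent μ (fun ω => (A ω, B ω, C ω)) + ent μ C =
      ent μ (fun ω => (A ω, C ω)) + ent μ (fun ω => (B ω, C ω)) := by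
  simp only [ent_eq_neg_sum_mul_log_law, ← neg_add, ← sum_add_distrib, ← mul_add]
  congr 1
  refine sum_mul_congr_of_pos hμ fun ω hω => ?_
  rw [← log_mul (law_pos hμ _ hω).ne' (law_pos hμ _ hω).ne',
    ← log_mul (law_pos hμ _ hω).ne' (law_pos hμ _ hω).ne', h]

end Entropy

section BSG

variable {Ω G T : Type*} [Fintype Ω] [AddCommGroup G] {μ : Ω → ℝ}

lemma ent_sub_add_ent_le (hμ : IsProb μ) (X X' Y : Ω → G) (Z : Ω → T) :
    ent μ (fun ω => (X ω - X' ω, Z ω)) + ent μ (fun ω => (X ω, X' ω, Y ω, Z ω)) ≤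
      ent μ (fun ω => (X ω + Y ω, X' ω + Y ω, Z ω)) + ent μ (fun ω => (X ω, X' ω, Z ω)) := by
  have hsub := ent_triple_add_ent_le hμ (fun ω => X' ω + Y ω) (fun ω => (X ω, X' ω))
    (fun ω => (X ω - X' ω, Z ω))
  have h₁ : ent μ (fun ω => (X' ω + Y ω, (X ω, X' ω), (X ω - X' ω, Z ω))) =
      ent μ (fun ω => (X ω, X' ω, Y ω, Z ω)) :=
    ent_congr_of_eq_iff fun _ _ => by simp only [Prod.mk.injEq]; grind
  have h₂ : ent μ (fun ω => (X' ω + Y ω, X ω - X' ω, Z ω)) =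
      ent μ (fun ω => (X ω + Y ω, X' ω + Y ω, Z ω)) :=
    ent_congr_of_eq_iff fun _ _ => by simp only [Prod.mk.injEq]; grind
  have h₃ : ent μ (fun ω => ((X ω, X' ω), X ω - X' ω, Z ω)) =
      ent μ (fun ω => (X ω, X' ω, Z ω)) :=
    ent_congr_of_eq_iff fun _ _ => by simp only [Prod.mk.injEq]; grind
  linarith

theorem condEnt_sub_le (hμ : IsProb μ) (X X' Y : Ω → G) (Z : Ω → T)
    (hcopy : law μ (fun ω => (X' ω, Y ω, Z ω)) = law μ (fun ω => (X ω, Y ω, Z ω)))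
    (hci : ∀ x x' yz, law μ (fun ω => (X ω, X' ω, Y ω, Z ω)) (x, x', yz) *
        law μ (fun ω => (Y ω, Z ω)) yz =
      law μ (fun ω => (X ω, Y ω, Z ω)) (x, yz) * law μ (fun ω => (X' ω, Y ω, Z ω)) (x', yz)) :
    condEnt μ (fun ω => X ω - X' ω) (fun ω => (Y ω, Z ω)) ≤
      2 * condEnt μ (fun ω => X ω + Y ω) Z + condEnt μ Y Z + 2 * condEnt μ X Z
        - 2 * condEnt μ (fun ω => (X ω, Y ω)) Z := by
  have hcond := ent_triple_add_ent_le hμ (fun ω => X ω - X' ω) Y Z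
  have hcore := ent_sub_add_ent_le hμ X X' Y Z
  have hsum := ent_triple_add_ent_le hμ (fun ω => X ω + Y ω) (fun ω => X' ω + Y ω) Z
  have hpair := ent_triple_add_ent_le hμ X X' Z
  have hindep := ent_triple_add_ent_eq_of_condIndep hμ.1 X X' (fun ω => (Y ω, Z ω)) hci
  have hcopyXYZ := ent_eq_of_law_eq hcopy
  have hcopyXZ := ent_comp_eq_of_law_eq hcopy fun s => (s.1, s.2.2)
  have hcopySum := ent_comp_eq_of_law_eq hcopy fun s => (s.1 + s.2.1, s.2.2)
  have hassoc : ent μ (fun ω => ((X ω, Y ω), Z ω)) = ent μ (fun ω => (X ω, Y ω, Z ω)) :=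
    ent_congr_of_eq_iff fun _ _ => by simp only [Prod.mk.injEq, and_assoc]
  simp only [condEnt] at hcopyXZ hcopySum ⊢
  linarith

end BSG

/-- Conditional entropic BSG, first form: if `(X',Y,Z)` is a copy of
`(X,Y,Z)` with `X, X'` conditionally independent given `(Y,Z)`, then
`H[X - X' | Y,Z] ≤ 2 H[X+Y|Z] + H[Y|Z] + 2 H[X|Z] - 2 H[X,Y|Z]`. -/
theorem conditional_entropic_BSG {Ω T : Type*} [Fintype Ω] (μ : Ω → ℝ) (hμ : IsProb μ)
    (X X' Y : Ω → ℚ) (Z : Ω → T)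
    (hcopy : ∀ (x y : ℚ) (z : T),
      prb μ {ω | X' ω = x ∧ Y ω = y ∧ Z ω = z} = prb μ {ω | X ω = x ∧ Y ω = y ∧ Z ω = z})
    (hci : ∀ (x x' y : ℚ) (z : T),
      prb μ {ω | X ω = x ∧ X' ω = x' ∧ Y ω = y ∧ Z ω = z} * prb μ {ω | Y ω = y ∧ Z ω = z} =
        prb μ {ω | X ω = x ∧ Y ω = y ∧ Z ω = z} *
          prb μ {ω | X' ω = x' ∧ Y ω = y ∧ Z ω = z}) :
    condEnt μ (fun ω => X ω - X' ω) (fun ω => (Y ω, Z ω)) ≤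
      2 * condEnt μ (fun ω => X ω + Y ω) Z + condEnt μ Y Z + 2 * condEnt μ X Z
        - 2 * condEnt μ (fun ω => (X ω, Y ω)) Z := by
  refine condEnt_sub_le hμ X X' Y Z ?_ fun x x' ⟨y, z⟩ => ?_
  · funext ⟨x, y, z⟩
    simpa only [law, Prod.mk.injEq] using hcopy x y z
  · simpa only [law, Prod.mk.injEq] using hci x x' y z
end

section
/- (Riemann-sum entropy asymptotics for smooth densities) Let f : ℝ → ℝ≥0 be a smooth compactly supported function with ∫ f = 1, and for integer b ≥ 2 let X_b be an integer-valued random variable with P(X_b = n) = (1/((1+ε_b)·b)) f(n/b), where ε_b = (1/b)∑_{n∈ℤ} f(n/b) - 1 = O(1/b). Then H[X_b] = log b + h(f) + o(1) as b → ∞, where h(f) = ∫_ℝ f(x) log(1/f(x)) dx is the differential entropy of f. -/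
open scoped Classical
open Finset

open Filter MeasureTheory intervalIntegral in
lemma riemann_sum_tendsto (g : ℝ → ℝ) (hg : Continuous g) (hs : HasCompactSupport g)
    (M : ℕ) (hM : ∀ x : ℝ, (M : ℝ) ≤ |x| → g x = 0) :
    Filter.Tendsto (fun b : ℕ => (∑ n ∈ Finset.Icc (-(M * b : ℤ)) (M * b), g ((n : ℝ) / b)) / b)
      Filter.atTop (nhds (∫ x, g x)) := by
  have hu : UniformContinuous g :=
    hg.uniformContinuous_of_tendsto_cocompact hs.is_zero_at_infty
  rw [Metric.tendsto_atTop]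
  intro ε hε
  have hε' : 0 < ε / (2 * M + 2) := by positivity
  obtain ⟨δ, hδ, hδ'⟩ := Metric.uniformContinuous_iff.mp hu _ hε'
  obtain ⟨B, hB⟩ := exists_nat_gt (1 / δ)
  refine ⟨max B 1, fun b hb => ?_⟩
  have hb1 : 1 ≤ b := le_trans (le_max_right _ _) hb
  have hbpos : (0:ℝ) < b := by exact_mod_cast hb1
  have hbδ : (1:ℝ) / b < δ := by
    have h1 : (1/δ : ℝ) < b := lt_of_lt_of_le hB (by exact_mod_cast le_trans (le_max_left _ _) hb)
    rw [div_lt_iff₀ hbpos]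
    nlinarith [(div_lt_iff₀ hδ).1 h1]
  set K := M * b with hK
  have hKcast : (M * b : ℤ) = (K : ℤ) := by push_cast [hK]; ring
  set a : ℕ → ℝ := fun i => -(M:ℝ) + i / b with ha
  set N := 2 * K with hN
  clear_value a
  have hstep : ∀ i : ℕ, a (i + 1) - a i = 1 / b := by
    intro i; simp only [ha]; push_cast; field_simp; ring
  have ha0 : a 0 = -(M:ℝ) := by simp [ha]
  have haN : a N = (M:ℝ) := by
    simp only [ha, hN, hK]; push_cast; field_simp; ring
  have hmono : ∀ i : ℕ, a i < a (i + 1) := by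
    intro i
    have h := hstep i
    have h2 : (0:ℝ) < 1 / b := by positivity
    linarith
  -- integral over ℝ equals interval integral
  have hint : ∫ x, g x = ∫ x in (-(M:ℝ))..(M:ℝ), g x := by
    refine (intervalIntegral.integral_eq_integral_of_support_subset ?_).symm
    intro x hx
    have h : |x| < M := lt_of_not_ge fun h => hx (hM x h)
    have h2 := abs_lt.mp h
    exact Set.mem_Ioc.mpr ⟨by linarith [h2.1], by linarith [h2.2]⟩
  have hsplit : ∑ i ∈ Finset.range N, ∫ x in (a i)..(a (i+1)), g x = ∫ x in (-(M:ℝ))..(M:ℝ), g x := by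
    rw [← ha0, ← haN]
    exact intervalIntegral.sum_integral_adjacent_intervals
      (fun k _ => (hg.intervalIntegrable _ _))
  -- reindex the integer sum
  have hre : ∑ n ∈ Finset.Icc (-(M * b : ℤ)) (M * b), g ((n : ℝ) / b)
      = ∑ i ∈ Finset.range (N + 1), g (a i) := by
    rw [hKcast]
    refine Finset.sum_nbij' (fun n => (n + K).toNat) (fun i => -(K : ℤ) + i) ?_ ?_ ?_ ?_ ?_
    · intro n hn; simp only [Finset.mem_Icc] at hn; simp only [Finset.mem_range, hN]; omega
    · intro i hi; simp only [Finset.mem_range, hN] at hi; simp only [Finset.mem_Icc]; omega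
    · intro n hn; simp only [Finset.mem_Icc] at hn; omega
    · intro i hi; simp only [Finset.mem_range, hN] at hi; omega
    · intro n hn
      simp only [Finset.mem_Icc] at hn
      have hc : ((((n + K).toNat : ℕ) : ℝ)) = (n : ℝ) + K := by
        have h3 : ((n + K).toNat : ℤ) = n + K := by omega
        exact_mod_cast congrArg (fun z : ℤ => (z : ℝ)) h3
      have hKr : ((K:ℕ) : ℝ) = (M : ℝ) * b := by push_cast [hK]; ring
      simp only [ha, hc, hKr]
      congr 1
      field_simp
      ring
  have hlast : g (a N) = 0 := by rw [haN]; exact hM _ (by simp)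
  have hsum : (∑ n ∈ Finset.Icc (-(M * b : ℤ)) (M * b), g ((n : ℝ) / b)) / b
      = ∑ i ∈ Finset.range N, g (a i) / b := by
    rw [hre, Finset.sum_range_succ, hlast, add_zero, Finset.sum_div]
  rw [hsum, Real.dist_eq, hint, ← hsplit, ← Finset.sum_sub_distrib]
  calc |∑ i ∈ Finset.range N, (g (a i) / b - ∫ x in (a i)..(a (i+1)), g x)|
      ≤ ∑ i ∈ Finset.range N, |g (a i) / b - ∫ x in (a i)..(a (i+1)), g x| :=
        Finset.abs_sum_le_sum_abs _ _
    _ ≤ ∑ i ∈ Finset.range N, (ε / (2 * M + 2)) * (1 / b) := by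
        refine Finset.sum_le_sum fun i _ => ?_
        have hconst : g (a i) / b = ∫ x in (a i)..(a (i+1)), g (a i) := by
          rw [intervalIntegral.integral_const, hstep i, smul_eq_mul]
          ring
        rw [hconst, ← intervalIntegral.integral_sub (by exact intervalIntegrable_const)
          (hg.intervalIntegrable _ _)]
        have := intervalIntegral.norm_integral_le_of_norm_le_const
          (f := fun x => g (a i) - g x) (C := ε / (2 * M + 2)) (a := a i) (b := a (i+1)) ?_
        · calc |∫ x in (a i)..(a (i+1)), (g (a i) - g x)| ≤ ε / (2*M+2) * |a (i+1) - a i| := this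
            _ = ε / (2*M+2) * (1/b) := by rw [hstep i]; congr 1; rw [abs_of_pos]; positivity
        · intro x hx
          rw [Set.uIoc_of_le (hmono i).le, Set.mem_Ioc] at hx
          have hd : dist (a i) x < δ := by
            rw [Real.dist_eq, abs_sub_comm, abs_of_pos (by linarith [hx.1])]
            calc x - a i ≤ a (i+1) - a i := by linarith [hx.2]
              _ = 1 / b := hstep i
              _ < δ := hbδ
          have := hδ' hd
          rw [Real.dist_eq] at this
          simpa [Real.norm_eq_abs] using this.le
    _ < ε := by
        rw [Finset.sum_const, Finset.card_range, nsmul_eq_mul]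
        have hNr : (N : ℝ) = 2 * M * b := by rw [hN, hK]; push_cast; ring
        rw [hNr]
        rw [show (2:ℝ) * M * b * (ε / (2*M+2) * (1/b)) = ε * (2*M) / (2*M+2) by field_simp]
        rw [div_lt_iff₀ (by positivity)]
        nlinarith

lemma vanish_outside (g : ℝ → ℝ) (M : ℕ) (hM : ∀ x : ℝ, (M : ℝ) ≤ |x| → g x = 0)
    {b : ℕ} (hb : 1 ≤ b) {n : ℤ} (hn : n ∉ Finset.Icc (-(M * b : ℤ)) (M * b)) :
    g ((n : ℝ) / b) = 0 := by
  apply hM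
  have hbpos : (0:ℝ) < b := by exact_mod_cast hb
  simp only [Finset.mem_Icc, not_and_or, not_le] at hn
  have habs : ((M : ℤ) * b) ≤ |n| := by
    rcases hn with h | h
    · exact le_abs.mpr (Or.inr (by linarith))
    · exact le_abs.mpr (Or.inl (by linarith))
  have hcast : ((M:ℝ) * b) ≤ |(n:ℝ)| := by
    rw [← Int.cast_abs] at *
    exact_mod_cast habs
  rw [abs_div, abs_of_pos hbpos, le_div_iff₀ hbpos]
  linarith

open Filter

/-- Riemann-sum entropy asymptotics for smooth densities:
if `f : ℝ → ℝ≥0` is smooth, compactly supported, of total mass one, and `X_b` is the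
integer-valued random variable with `P(X_b = n) = f(n/b)/((1+ε_b) b)` where
`ε_b = (1/b)∑_n f(n/b) - 1`, then `H[X_b] = log b + h(f) + o(1)` as `b → ∞`, where
`h(f) = ∫ f log(1/f)` is the differential entropy of `f`. -/
theorem entropy_riemann_asymptotics (f : ℝ → ℝ) (hf : ContDiff ℝ (⊤ : ℕ∞) f)
    (hsupp : HasCompactSupport f) (hpos : ∀ x, 0 ≤ f x) (hmass : ∫ x, f x = 1) :
    Filter.Tendsto
      (fun b : ℕ =>
        (∑' n : ℤ, Real.negMulLog
          (f ((n : ℝ) / b) / ((1 + ((∑' m : ℤ, f ((m : ℝ) / b)) / b - 1)) * b)))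
          - Real.log b)
      Filter.atTop (nhds (∫ x, Real.negMulLog (f x))) := by
  obtain ⟨r, hr⟩ := hsupp.isBounded.subset_closedBall 0
  obtain ⟨M, hMr⟩ := exists_nat_gt r
  have hM : ∀ x : ℝ, (M:ℝ) ≤ |x| → f x = 0 := by
    intro x hx
    apply image_eq_zero_of_notMem_tsupport
    intro hmem
    have h2 := hr hmem
    rw [Metric.mem_closedBall, Real.dist_eq, sub_zero] at h2
    linarith
  have hFM : ∀ x : ℝ, (M:ℝ) ≤ |x| → Real.negMulLog (f x) = 0 := fun x hx => by
    rw [hM x hx, Real.negMulLog_zero]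
  have hFc : Continuous (fun x => Real.negMulLog (f x)) :=
    Real.continuous_negMulLog.comp hf.continuous
  have hFs : HasCompactSupport (fun x => Real.negMulLog (f x)) :=
    hsupp.comp_left (g := Real.negMulLog) Real.negMulLog_zero
  have h1 := riemann_sum_tendsto f hf.continuous hsupp M hM
  rw [hmass] at h1
  have h2 := riemann_sum_tendsto _ hFc hFs M hFM
  have hlim : Tendsto (fun b : ℕ =>
      ((∑ n ∈ Finset.Icc (-(M * b : ℤ)) (M * b), Real.negMulLog (f ((n : ℝ) / b))) / b)
        / ((∑ n ∈ Finset.Icc (-(M * b : ℤ)) (M * b), f ((n : ℝ) / b)) / b)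
      + Real.log ((∑ n ∈ Finset.Icc (-(M * b : ℤ)) (M * b), f ((n : ℝ) / b)) / b))
      atTop (nhds (∫ x, Real.negMulLog (f x))) := by
    have := (h2.div h1 one_ne_zero).add (h1.log one_ne_zero)
    simpa using this
  refine hlim.congr' ?_
  have hev : ∀ᶠ b : ℕ in atTop,
      (1:ℝ)/2 < (∑ n ∈ Finset.Icc (-(M * b : ℤ)) (M * b), f ((n : ℝ) / b)) / b :=
    h1.eventually (eventually_gt_nhds (by norm_num))
  filter_upwards [hev, eventually_ge_atTop 1] with b hTb hb1
  have hbpos : (0:ℝ) < b := by exact_mod_cast hb1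
  set S := Finset.Icc (-(M * b : ℤ)) (M * b) with hS
  set T := ∑ n ∈ S, f ((n : ℝ) / b) with hT
  set A := ∑ n ∈ S, Real.negMulLog (f ((n : ℝ) / b)) with hA
  have hTpos : 0 < T := by
    have := (lt_div_iff₀ hbpos).mp hTb
    nlinarith
  have htsumf : ∑' m : ℤ, f ((m:ℝ)/b) = T :=
    tsum_eq_sum (fun n hn => vanish_outside f M hM hb1 hn)
  have hfac : (1 + ((∑' m : ℤ, f ((m:ℝ)/b)) / b - 1)) * b = T := by
    rw [htsumf]; field_simp; ring
  have htsum2 : (∑' n : ℤ, Real.negMulLog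
      (f ((n:ℝ)/b) / ((1 + ((∑' m : ℤ, f ((m:ℝ)/b)) / b - 1)) * b)))
      = ∑ n ∈ S, Real.negMulLog (f ((n:ℝ)/b) / T) := by
    simp only [hfac]
    exact tsum_eq_sum (fun n hn => by
      rw [vanish_outside f M hM hb1 hn, zero_div, Real.negMulLog_zero])
  have hptwise : ∀ x : ℝ, 0 ≤ x →
      Real.negMulLog (x / T) = Real.negMulLog x / T + (x / T) * Real.log T := by
    intro x hx
    rcases eq_or_lt_of_le hx with h | h
    · simp [← h]
    · simp only [Real.negMulLog]
      rw [Real.log_div h.ne' hTpos.ne']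
      field_simp
      ring
  have hsplit : ∑ n ∈ S, Real.negMulLog (f ((n:ℝ)/b) / T) = A / T + Real.log T := by
    rw [Finset.sum_congr rfl (fun n _ => hptwise _ (hpos _)), Finset.sum_add_distrib,
      ← Finset.sum_div, ← Finset.sum_mul, ← Finset.sum_div, ← hT, ← hA,
      div_self hTpos.ne', one_mul]
  show _ = _
  rw [htsum2, hsplit, Real.log_div hTpos.ne' hbpos.ne']
  have hd : A / b / (T / b) = A / T := by
    rw [div_div_div_comm, div_self hbpos.ne', div_one]
  rw [hd]
  ring
end
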